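/- Let E > 0 and a ≠ 0, and let (P,L) ∈ ℝ³ × ℝ³ satisfy |P|² = 2E and P·L = 0. Then there exists β ∈ ℝ such that the Hamiltonian vector fields of G and L_z are parallel at (P,L), i.e. -2 P × L - β (P × e_z) = 0 and -2a² P₃ (P × e_z) - β (L × e_z) = 0, if and only if either (P = (0,0,√(2E)) or P = (0,0,-√(2E))) and L = (0,0,0), or P₃ = 0 and L₁ = L₂ = 0. That is, the critical points of the momentum map (L_z, G) on T*S² are exactly the two poles with zero angular momentum (the focus-focus points) and the points over the equator of the momentum sphere with L parallel to the z-axis. -/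

import Mathlib

noncomputable section

/-- The cross product in `ℝ³`. -/
def cross3 (v w : Fin 3 → ℝ) : Fin 3 → ℝ :=
  ![v 1 * w 2 - v 2 * w 1, v 2 * w 0 - v 0 * w 2, v 0 * w 1 - v 1 * w 0]

/-- The dot product in `ℝ³`. -/
def dot3 (v w : Fin 3 → ℝ) : ℝ := v 0 * w 0 + v 1 * w 1 + v 2 * w 2

/-- The unit vector `e_z = (0,0,1)`. -/
def ez : Fin 3 → ℝ := ![0, 0, 1]

/-!
The first equation says `P × (2L + β e_z) = 0`, so `2L + β e_z` is a multiple of `P`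
(by `P × (P × w) = (P·w) P - |P|² w`), and `P·L = 0` fixes the multiple:
`4E L = β (P₃ P - 2E e_z)`. The second equation says `(2a²P₃) P + β L` is parallel to `e_z`;
substituting `L` gives `(8a²E + β²) P₃ P₁ = (8a²E + β²) P₃ P₂ = 0`. So either `P₃ = 0`, and
then `L ∥ e_z`, or `P` is a pole, and then `P₃² = 2E` forces `L = 0`.
-/

open Matrix

theorem cross3_eq_crossProduct (v w : Fin 3 → ℝ) : cross3 v w = v ⨯₃ w :=
  (cross_apply v w).symm

theorem dot3_eq_dotProduct (v w : Fin 3 → ℝ) : dot3 v w = v ⬝ᵥ w :=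
  (vec3_dotProduct v w).symm

theorem dotProduct_ez (v : Fin 3 → ℝ) : v ⬝ᵥ ez = v 2 := by
  simp [dotProduct, Fin.sum_univ_three, ez]

theorem cross3_ez_eq_zero_iff (v : Fin 3 → ℝ) : cross3 v ez = 0 ↔ v 0 = 0 ∧ v 1 = 0 := by
  simp [cross3, ez, and_comm]

theorem dotProduct_self_smul_eq_of_cross_eq_zero {R : Type*} [CommRing R] {u w : Fin 3 → R}
    (h : u ⨯₃ w = 0) : (u ⬝ᵥ u) • w = (u ⬝ᵥ w) • u := by
  have h' := cross_cross_eq_smul_sub_smul' u u w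
  rwa [h, map_zero, eq_comm, sub_eq_zero, eq_comm] at h'

theorem neg_two_smul_cross3_sub_smul_cross3_ez (β : ℝ) (P L : Fin 3 → ℝ) :
    (-2 : ℝ) • cross3 P L - β • cross3 P ez = -cross3 P ((2 : ℝ) • L + β • ez) := by
  simp only [cross3_eq_crossProduct, map_add, map_smul]
  module

theorem neg_smul_cross3_ez_sub_smul_cross3_ez (k β : ℝ) (P L : Fin 3 → ℝ) :
    (-k) • cross3 P ez - β • cross3 L ez = -cross3 (k • P + β • L) ez := by
  simp only [cross3_eq_crossProduct, map_add, map_smul, LinearMap.add_apply,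
    LinearMap.smul_apply]
  module

theorem on_z_axis_iff_eq_pole {E : ℝ} (hE : 0 ≤ E) {P : Fin 3 → ℝ} (hP : dot3 P P = 2 * E) :
    (P 0 = 0 ∧ P 1 = 0) ↔ (P = ![0, 0, √(2 * E)] ∨ P = ![0, 0, -√(2 * E)]) := by
  constructor
  · rintro ⟨h0, h1⟩
    have hP2 : P 2 ^ 2 = √(2 * E) ^ 2 := by
      rw [Real.sq_sqrt (by linarith), ← hP, dot3, h0, h1]; ring
    have hP_eta : P = ![0, 0, P 2] := by
      ext i; fin_cases i <;> simp [h0, h1]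
    rcases sq_eq_sq_iff_eq_or_eq_neg.mp hP2 with h | h
    · left; rw [hP_eta, h]
    · right; rw [hP_eta, h]
  · rintro (rfl | rfl) <;> simp

theorem four_mul_smul_eq_of_fields_parallel {E β : ℝ} {P L : Fin 3 → ℝ}
    (hP : dot3 P P = 2 * E) (hPL : dot3 P L = 0)
    (h : (-2 : ℝ) • cross3 P L - β • cross3 P ez = 0) :
    (4 * E) • L = β • (P 2 • P - (2 * E) • ez) := by
  rw [neg_two_smul_cross3_sub_smul_cross3_ez, neg_eq_zero, cross3_eq_crossProduct] at h
  rw [dot3_eq_dotProduct] at hP hPL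
  have hdir := dotProduct_self_smul_eq_of_cross_eq_zero h
  rw [hP, dotProduct_add, dotProduct_smul, dotProduct_smul, hPL, dotProduct_ez] at hdir
  linear_combination (norm := module) hdir

theorem pole_or_equator_of_fields_parallel {E a β : ℝ} (hE : 0 < E) (ha : a ≠ 0)
    {P L : Fin 3 → ℝ} (hP : dot3 P P = 2 * E) (hPL : dot3 P L = 0)
    (h₁ : (-2 : ℝ) • cross3 P L - β • cross3 P ez = 0)
    (h₂ : (-(2 * a ^ 2 * P 2)) • cross3 P ez - β • cross3 L ez = 0) :
    ((P 0 = 0 ∧ P 1 = 0) ∧ L = 0) ∨ (P 2 = 0 ∧ L 0 = 0 ∧ L 1 = 0) := by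
  have hL := four_mul_smul_eq_of_fields_parallel hP hPL h₁
  have hL₀ := congrFun hL 0
  have hL₁ := congrFun hL 1
  have hL₂ := congrFun hL 2
  simp only [Pi.sub_apply, Pi.smul_apply, smul_eq_mul, ez, cons_val] at hL₀ hL₁ hL₂
  rw [neg_smul_cross3_ez_sub_smul_cross3_ez, neg_eq_zero, cross3_ez_eq_zero_iff] at h₂
  obtain ⟨hv₀, hv₁⟩ := h₂
  simp only [Pi.add_apply, Pi.smul_apply, smul_eq_mul] at hv₀ hv₁
  have hpos : 0 < 8 * a ^ 2 * E + β ^ 2 := by positivity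
  have hP₂P₀ : P 2 * P 0 = 0 := by
    have h : P 2 * P 0 * (8 * a ^ 2 * E + β ^ 2) = 0 := by
      linear_combination (4 * E) * hv₀ - β * hL₀
    exact (mul_eq_zero.mp h).resolve_right hpos.ne'
  have hP₂P₁ : P 2 * P 1 = 0 := by
    have h : P 2 * P 1 * (8 * a ^ 2 * E + β ^ 2) = 0 := by
      linear_combination (4 * E) * hv₁ - β * hL₁
    exact (mul_eq_zero.mp h).resolve_right hpos.ne'
  have hL_eq_zero (i : Fin 3) (h : 4 * E * L i = 0) : L i = 0 :=
    (mul_eq_zero.mp h).resolve_left (by positivity)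
  by_cases hP₂ : P 2 = 0
  · exact .inr ⟨hP₂, hL_eq_zero 0 (by linear_combination hL₀ + β * P 0 * hP₂),
      hL_eq_zero 1 (by linear_combination hL₁ + β * P 1 * hP₂)⟩
  · have hP₀ : P 0 = 0 := (mul_eq_zero.mp hP₂P₀).resolve_left hP₂
    have hP₁ : P 1 = 0 := (mul_eq_zero.mp hP₂P₁).resolve_left hP₂
    rw [dot3, hP₀, hP₁] at hP
    refine .inl ⟨⟨hP₀, hP₁⟩, ?_⟩
    ext i
    fin_cases i
    · exact hL_eq_zero 0 (by linear_combination hL₀ + β * P 2 * hP₀)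
    · exact hL_eq_zero 1 (by linear_combination hL₁ + β * P 2 * hP₁)
    · exact hL_eq_zero 2 (by linear_combination hL₂ + β * hP)

theorem fields_parallel_at_pole (a : ℝ) {P : Fin 3 → ℝ} (hP : P 0 = 0 ∧ P 1 = 0) :
    ∃ β : ℝ, (-2 : ℝ) • cross3 P 0 - β • cross3 P ez = 0 ∧
      (-(2 * a ^ 2 * P 2)) • cross3 P ez - β • cross3 0 ez = 0 := by
  have hPez : cross3 P ez = 0 := (cross3_ez_eq_zero_iff P).mpr hP
  exact ⟨0, by simp [cross3], by rw [hPez]; simp [cross3]⟩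

theorem fields_parallel_at_equator (a : ℝ) {P L : Fin 3 → ℝ} (hP₂ : P 2 = 0)
    (hL₀ : L 0 = 0) (hL₁ : L 1 = 0) :
    ∃ β : ℝ, (-2 : ℝ) • cross3 P L - β • cross3 P ez = 0 ∧
      (-(2 * a ^ 2 * P 2)) • cross3 P ez - β • cross3 L ez = 0 := by
  have hL : L = L 2 • ez := by
    ext i; fin_cases i <;> simp [ez, hL₀, hL₁]
  refine ⟨-2 * L 2, ?_, ?_⟩
  · nth_rw 1 [hL]
    rw [cross3_eq_crossProduct, cross3_eq_crossProduct, map_smul]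
    module
  · rw [hP₂, (cross3_ez_eq_zero_iff L).mpr ⟨hL₀, hL₁⟩]
    simp

/-- Critical points of the momentum map `(L_z, G)` on `T*S²`: for `E > 0`, `a ≠ 0`,
`|P|² = 2E`, `P·L = 0`, the Hamiltonian vector fields of `G` (namely
`(-2P×L, -2a²P₃(P×e_z))`) and of `L_z` (namely `(-P×e_z, -L×e_z)`) are parallel
for some `β ∈ ℝ` iff either `P = (0,0,±√(2E))` and `L = 0` (the focus-focus
points), or `P₃ = 0` and `L₁ = L₂ = 0` (the equator points with `L ∥ e_z`). -/
theorem critical_points_momentum_map (E a : ℝ) (hE : 0 < E) (ha : a ≠ 0)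
    (P L : Fin 3 → ℝ) (hP : dot3 P P = 2 * E) (hPL : dot3 P L = 0) :
    (∃ β : ℝ,
        (-2 : ℝ) • cross3 P L - β • cross3 P ez = 0 ∧
        (-(2 * a ^ 2 * P 2)) • cross3 P ez - β • cross3 L ez = 0) ↔
      (((P = ![0, 0, Real.sqrt (2 * E)] ∨ P = ![0, 0, -Real.sqrt (2 * E)]) ∧ L = 0) ∨
        (P 2 = 0 ∧ L 0 = 0 ∧ L 1 = 0)) := by
  rw [← on_z_axis_iff_eq_pole hE.le hP]
  constructor
  · rintro ⟨β, h₁, h₂⟩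
    exact pole_or_equator_of_fields_parallel hE ha hP hPL h₁ h₂
  · rintro (⟨hPz, rfl⟩ | ⟨hP₂, hL₀, hL₁⟩)
    · exact fields_parallel_at_pole a hPz
    · exact fields_parallel_at_equator a hP₂ hL₀ hL₁
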